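/- In the two-group imitation game induced by an $M$-Lipschitz map $f : [0,1]^m \to [0,1]^m$ with action grids $\{0, 1/k, \dots, 1\}$ (player $(i,1)$ gets $-|a_i - b_i|^2$, player $(i,2)$ gets $-|f_i(\mathbf{a}) - b_i|^2$), every pure Nash equilibrium and more generally every $\frac{3}{4k^2}$-well-supported Nash equilibrium yields a point $\alpha \in ([0,1])^m$ with grid coordinates such that $\|\alpha - f(\alpha)\|_\infty \leq \frac{3+M}{k}$. -/

import Mathlib

/-!
Let `β i` be the mean of player `(i,2)`'s mixed action and `α i` the grid point just below it.
Under quadratic loss an action's payoff gap to the best grid action is governed by its distance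
to the mean of the opponent's play, so every action in the support of a `3/(4k²)`-well-supported
equilibrium is within `1/k` of that mean. Thus the support of player `(i,1)` lies within `1/k`
of `β i`, hence (being on the grid) within `1/k` of `α i`; and the support of player `(i,2)`
lies within `1/k` of `γ i = E[fᵢ(a)]`, so `|β i - γ i| ≤ 1/k`. By the Lipschitz bound,
`|γ i - fᵢ(α)| ≤ M/k`, and the triangle inequality gives `|α i - fᵢ(α)| ≤ (2 + M)/k`.
-/

open Finset

lemma grid_mem_Icc (k : ℕ) (j : Fin (k + 1)) : (j : ℝ) / k ∈ Set.Icc (0 : ℝ) 1 :=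
  ⟨by positivity, div_le_one_of_le₀ (by exact_mod_cast Nat.lt_succ_iff.mp j.isLt) k.cast_nonneg⟩

lemma exists_grid_abs_sub_le {k : ℕ} (hk : 1 ≤ k) {μ : ℝ} (hμ : μ ∈ Set.Icc (0 : ℝ) 1) :
    ∃ j : Fin (k + 1), |(j : ℝ) / k - μ| ≤ 1 / (2 * k) := by
  have hkpos : (0 : ℝ) < k := by exact_mod_cast hk
  have ht : 0 ≤ k * μ + 1 / 2 := by have := hμ.1; positivity
  have hlt : ⌊k * μ + 1 / 2⌋₊ < k + 1 := by
    rw [Nat.floor_lt ht]; push_cast; nlinarith [hμ.2]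
  refine ⟨⟨_, hlt⟩, ?_⟩
  have hround : |(⌊k * μ + 1 / 2⌋₊ : ℝ) - k * μ| ≤ 1 / 2 :=
    abs_le.mpr ⟨by linarith [Nat.lt_floor_add_one (k * μ + 1 / 2)], by linarith [Nat.floor_le ht]⟩
  calc |(⌊k * μ + 1 / 2⌋₊ : ℝ) / k - μ| = |(⌊k * μ + 1 / 2⌋₊ : ℝ) - k * μ| / k := by
        rw [← abs_of_pos hkpos, ← abs_div, abs_of_pos hkpos, sub_div,
          mul_div_cancel_left₀ _ hkpos.ne']
    _ ≤ 1 / 2 / k := by gcongr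
    _ = 1 / (2 * k) := by rw [div_div]

lemma exists_grid_floor {k : ℕ} (hk : 0 < k) {t : ℝ} (ht : t ∈ Set.Icc (0 : ℝ) 1) :
    ∃ j : Fin (k + 1), (j : ℝ) / k ≤ t ∧ t < j / k + 1 / k := by
  obtain ⟨ht0, ht1⟩ := ht
  have hkpos : (0 : ℝ) < k := by exact_mod_cast hk
  have hkt : 0 ≤ k * t := mul_nonneg hkpos.le ht0
  refine ⟨⟨⌊k * t⌋₊, Nat.lt_succ_of_le (Nat.floor_le_of_le (by nlinarith))⟩, ?_, ?_⟩
  · rw [div_le_iff₀ hkpos]; exact (Nat.floor_le hkt).trans_eq (mul_comm _ _)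
  · rw [← add_div, lt_div_iff₀ hkpos]; exact (Nat.lt_floor_add_one _).trans_eq' (mul_comm _ _)

/-- The strict upper bound `t < (j + 1)/k` matters: it keeps `a ≤ j + 1`. -/
lemma abs_grid_sub_le_of_floor {k : ℕ} (hk : 0 < k) {a j : ℕ} {t : ℝ} (hj : (j : ℝ) / k ≤ t)
    (ht : t < j / k + 1 / k) (ha : |(a : ℝ) / k - t| ≤ 1 / k) :
    |(a : ℝ) / k - j / k| ≤ 1 / k := by
  have hkpos : (0 : ℝ) < k := by exact_mod_cast hk
  obtain ⟨hlo, hhi⟩ := abs_le.mp ha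
  have haj : a ≤ j + 1 := by
    have : (a : ℝ) / k < (j + 2) / k := by
      rw [add_div, show (2 : ℝ) / k = 1 / k + 1 / k by ring]; linarith
    have : (a : ℝ) < j + 2 := by rwa [div_lt_div_iff_of_pos_right hkpos] at this
    exact_mod_cast Nat.lt_succ_iff.mp (by exact_mod_cast this)
  have : (a : ℝ) / k ≤ j / k + 1 / k := by
    rw [← add_div]; gcongr; exact_mod_cast haj
  exact abs_le.mpr ⟨by linarith, by linarith⟩

section WeightedMean

variable {ι : Type*} [Fintype ι] {w : ι → ℝ}

lemma sum_mul_mem_Icc_zero_one (hw0 : ∀ i, 0 ≤ w i) (hw1 : ∑ i, w i = 1) {v : ι → ℝ}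
    (hv : ∀ i, v i ∈ Set.Icc (0 : ℝ) 1) : ∑ i, w i * v i ∈ Set.Icc (0 : ℝ) 1 := by
  simpa only [smul_eq_mul] using
    (convex_Icc (0 : ℝ) 1).sum_mem (fun i _ => hw0 i) hw1 (fun i _ => hv i)

lemma abs_sum_mul_sub_le (hw0 : ∀ i, 0 ≤ w i) (hw1 : ∑ i, w i = 1) {v : ι → ℝ} {c r : ℝ}
    (h : ∀ i, 0 < w i → |v i - c| ≤ r) : |∑ i, w i * v i - c| ≤ r := by
  have hsum : ∑ i, w i * v i - c = ∑ i, w i * (v i - c) := by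
    simp only [mul_sub, sum_sub_distrib, ← sum_mul, hw1, one_mul]
  calc |∑ i, w i * v i - c| ≤ ∑ i, |w i * (v i - c)| := hsum ▸ abs_sum_le_sum_abs _ _
    _ ≤ ∑ i, w i * r := by
        refine sum_le_sum fun i _ => ?_
        rcases (hw0 i).eq_or_lt with h0 | h0
        · simp [← h0]
        · rw [abs_mul, abs_of_pos h0]
          exact mul_le_mul_of_nonneg_left (h i h0) h0.le
    _ = r := by rw [← sum_mul, hw1, one_mul]

lemma sum_mul_neg_sq_sub_sub_sum (hw1 : ∑ i, w i = 1) (v : ι → ℝ) (x x' : ℝ) :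
    ∑ i, w i * (-(x - v i) ^ 2) - ∑ i, w i * (-(x' - v i) ^ 2) =
      (x' - ∑ i, w i * v i) ^ 2 - (x - ∑ i, w i * v i) ^ 2 := by
  have h : ∀ i, w i * (-(x - v i) ^ 2) - w i * (-(x' - v i) ^ 2) =
      (x' ^ 2 - x ^ 2) * w i + 2 * (x - x') * (w i * v i) := fun i => by ring
  rw [← sum_sub_distrib, sum_congr rfl fun i _ => h i, sum_add_distrib, ← mul_sum, ← mul_sum,
    hw1]
  ring

/-- Some grid action lies within `1/(2k)` of the mean, and `1/(4k²) + 3/(4k²) = 1/k²`. -/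
lemma abs_sub_sum_mul_le_of_forall_grid {k : ℕ} (hk : 1 ≤ k) (hw0 : ∀ i, 0 ≤ w i)
    (hw1 : ∑ i, w i = 1) {v : ι → ℝ} (hv : ∀ i, v i ∈ Set.Icc (0 : ℝ) 1) {x : ℝ}
    (hx : ∀ j : Fin (k + 1), ∑ i, w i * (-(x - v i) ^ 2) ≥
      ∑ i, w i * (-((j : ℝ) / k - v i) ^ 2) - 3 / (4 * (k : ℝ) ^ 2)) :
    |x - ∑ i, w i * v i| ≤ 1 / k := by
  have hkpos : (0 : ℝ) < k := by exact_mod_cast hk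
  obtain ⟨j, hj⟩ := exists_grid_abs_sub_le hk (sum_mul_mem_Icc_zero_one hw0 hw1 hv)
  have hgap := sum_mul_neg_sq_sub_sub_sum hw1 v x ((j : ℝ) / k)
  have hj2 : ((j : ℝ) / k - ∑ i, w i * v i) ^ 2 ≤ (1 / (2 * k)) ^ 2 :=
    sq_le_sq' (abs_le.mp hj).1 (abs_le.mp hj).2
  have hsum : (1 / (2 * (k : ℝ))) ^ 2 + 3 / (4 * (k : ℝ) ^ 2) = (1 / k) ^ 2 := by
    field_simp; norm_num
  exact abs_le_of_sq_le_sq (by linarith [hx j]) (by positivity)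

end WeightedMean

section ProductWeights

variable {ι : Type*} [Fintype ι] {n : ℕ} {p : ι → Fin n → ℝ}

lemma sum_prod_eq_one [DecidableEq ι] (hp1 : ∀ i, ∑ a, p i a = 1) :
    ∑ a : ι → Fin n, ∏ j, p j (a j) = 1 := by
  rw [← Fintype.piFinset_univ, ← prod_univ_sum]; simp [hp1]

lemma pos_of_prod_pos (hp0 : ∀ i a, 0 ≤ p i a) {a : ι → Fin n} (ha : 0 < ∏ j, p j (a j))
    (j : ι) : 0 < p j (a j) :=
  (hp0 j (a j)).lt_of_ne' ((prod_ne_zero_iff.mp ha.ne') j (mem_univ j))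

end ProductWeights

lemma abs_sum_prod_mul_sub_le_of_lipschitz {m k : ℕ} {M r : ℝ} (hM : 0 ≤ M) (hr : 0 ≤ r)
    {f : (Fin m → ℝ) → (Fin m → ℝ)}
    (hLip : ∀ x y, (∀ i, x i ∈ Set.Icc (0 : ℝ) 1) → (∀ i, y i ∈ Set.Icc (0 : ℝ) 1) →
      ‖f x - f y‖ ≤ M * ‖x - y‖)
    {p : Fin m → Fin (k + 1) → ℝ} (hp0 : ∀ i a, 0 ≤ p i a) (hp1 : ∀ i, ∑ a, p i a = 1)
    {α : Fin m → ℝ} (hα : ∀ i, α i ∈ Set.Icc (0 : ℝ) 1)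
    (hsupp : ∀ i a, 0 < p i a → |(a : ℝ) / k - α i| ≤ r) (i : Fin m) :
    |∑ a : Fin m → Fin (k + 1), (∏ j, p j (a j)) * f (fun j => (a j : ℝ) / k) i - f α i| ≤
      M * r := by
  refine abs_sum_mul_sub_le (fun a => prod_nonneg fun j _ => hp0 j (a j)) (sum_prod_eq_one hp1)
    fun a ha => ?_
  have hnear : ‖(fun j => (a j : ℝ) / k) - α‖ ≤ r :=
    (pi_norm_le_iff_of_nonneg hr).mpr fun j => hsupp j (a j) (pos_of_prod_pos hp0 ha j)
  calc |f (fun j => (a j : ℝ) / k) i - f α i| ≤ ‖f (fun j => (a j : ℝ) / k) - f α‖ :=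
        norm_le_pi_norm (f _ - f α) i
    _ ≤ M * ‖(fun j => (a j : ℝ) / k) - α‖ := hLip _ _ (fun j => grid_mem_Icc k (a j)) hα
    _ ≤ M * r := by gcongr

/-- in the two-group imitation game induced by an `M`-Lipschitz (sup-norm)
map `f : [0,1]^m → [0,1]^m` on the grid `{0, 1/k, …, 1}` (player `(i,1)` plays `aᵢ` and gets
`-(aᵢ - bᵢ)²`, player `(i,2)` plays `bᵢ` and gets `-(fᵢ(a) - bᵢ)²`), every
`3/(4k²)`-well-supported Nash equilibrium (in particular every pure Nash equilibrium)
yields a grid point `α` with `E[bᵢ] ∈ [αᵢ, αᵢ + 1/k]` and `‖α - f α‖∞ ≤ (3+M)/k`.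
Action `j : Fin (k+1)` corresponds to the real value `j/k`. -/
theorem stmt15 (m : ℕ) (M : ℝ) (hM : 0 ≤ M) (k : ℕ) (hk : 1 ≤ k)
    (f : (Fin m → ℝ) → (Fin m → ℝ))
    (hrange : ∀ x, (∀ i, x i ∈ Set.Icc (0 : ℝ) 1) → ∀ i, f x i ∈ Set.Icc (0 : ℝ) 1)
    (hLip : ∀ x y, (∀ i, x i ∈ Set.Icc (0 : ℝ) 1) → (∀ i, y i ∈ Set.Icc (0 : ℝ) 1) →
      ‖f x - f y‖ ≤ M * ‖x - y‖)
    (p q : Fin m → Fin (k + 1) → ℝ)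
    (hp0 : ∀ i a, 0 ≤ p i a) (hp1 : ∀ i, ∑ a, p i a = 1)
    (hq0 : ∀ i b, 0 ≤ q i b) (hq1 : ∀ i, ∑ b, q i b = 1)
    (hWSNE1 : ∀ i (a : Fin (k + 1)), 0 < p i a → ∀ a' : Fin (k + 1),
      (∑ b, q i b * (-(((a : ℝ) / k) - ((b : ℝ) / k)) ^ 2)) ≥
        (∑ b, q i b * (-(((a' : ℝ) / k) - ((b : ℝ) / k)) ^ 2)) - 3 / (4 * (k : ℝ) ^ 2))
    (hWSNE2 : ∀ i (b : Fin (k + 1)), 0 < q i b → ∀ b' : Fin (k + 1),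
      (∑ a : Fin m → Fin (k + 1), (∏ j, p j (a j)) *
          (-(f (fun j => ((a j : ℝ) / k)) i - ((b : ℝ) / k)) ^ 2)) ≥
        (∑ a : Fin m → Fin (k + 1), (∏ j, p j (a j)) *
          (-(f (fun j => ((a j : ℝ) / k)) i - ((b' : ℝ) / k)) ^ 2)) - 3 / (4 * (k : ℝ) ^ 2)) :
    ∃ α : Fin m → ℝ, (∀ i, ∃ j : Fin (k + 1), α i = (j : ℝ) / k) ∧
      (∀ i, (∑ b, q i b * ((b : ℝ) / k)) ∈ Set.Icc (α i) (α i + 1 / k)) ∧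
      ‖α - f α‖ ≤ (3 + M) / k := by
  have hkpos : (0 : ℝ) < k := by exact_mod_cast hk
  set β : Fin m → ℝ := fun i => ∑ b, q i b * ((b : ℝ) / k)
  choose j hj using fun i =>
    exists_grid_floor hk (sum_mul_mem_Icc_zero_one (hq0 i) (hq1 i) (grid_mem_Icc k))
  set α : Fin m → ℝ := fun i => (j i : ℝ) / k
  have hα : ∀ i, α i ∈ Set.Icc (0 : ℝ) 1 := fun i => grid_mem_Icc k (j i)
  have hαβ : ∀ i, |α i - β i| ≤ 1 / k := fun i => by
    simp only [α, β]
    exact abs_le.mpr ⟨by linarith [(hj i).2], by linarith [(hj i).1, one_div_pos.mpr hkpos]⟩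
  have hp_near : ∀ i a, 0 < p i a → |(a : ℝ) / k - α i| ≤ 1 / k := fun i a ha =>
    abs_grid_sub_le_of_floor hk (hj i).1 (hj i).2 <|
      abs_sub_sum_mul_le_of_forall_grid hk (hq0 i) (hq1 i) (grid_mem_Icc k) (hWSNE1 i a ha)
  set γ : Fin m → ℝ := fun i =>
    ∑ a : Fin m → Fin (k + 1), (∏ j, p j (a j)) * f (fun j => (a j : ℝ) / k) i
  have hβγ : ∀ i, |β i - γ i| ≤ 1 / k := fun i =>
    abs_sum_mul_sub_le (hq0 i) (hq1 i) fun b hb =>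
      abs_sub_sum_mul_le_of_forall_grid hk (fun a => prod_nonneg fun j _ => hp0 j (a j))
        (sum_prod_eq_one hp1) (fun a => hrange _ (fun j => grid_mem_Icc k (a j)) i)
        (by simpa only [sub_sq_comm (f _ i)] using hWSNE2 i b hb)
  have hγf : ∀ i, |γ i - f α i| ≤ M * (1 / k) := abs_sum_prod_mul_sub_le_of_lipschitz hM
    (by positivity) hLip hp0 hp1 hα hp_near
  refine ⟨α, fun i => ⟨j i, rfl⟩, fun i => ⟨(hj i).1, (hj i).2.le⟩,
    (pi_norm_le_iff_of_nonneg (by positivity)).mpr fun i => ?_⟩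
  calc ‖(α - f α) i‖ ≤ |α i - β i| + |β i - γ i| + |γ i - f α i| := by
        rw [Pi.sub_apply, Real.norm_eq_abs]
        linarith [abs_sub_le (α i) (β i) (f α i), abs_sub_le (β i) (γ i) (f α i)]
    _ ≤ 1 / k + 1 / k + M * (1 / k) := by gcongr <;> apply_assumption
    _ = (2 + M) / k := by ring
    _ ≤ (3 + M) / k := by gcongr; norm_num
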